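/- Let N ≥ 1, n ≥ 1 and let f: {0,1}^n → {0,1} be almost balanced. Then P⁰ is a conditional probability distribution: for all allowed input strings (u,v) and all x,y ∈ {0,1}^n, P⁰(x,y|u,v) ≥ 0, and Σ_{x,y ∈ {0,1}^n} P⁰(x,y|u,v) = 1. -/

import Mathlib

open Finset

/-- `sin²(π/(4N))`. -/
noncomputable def s2 (N : ℕ) : ℝ := Real.sin (Real.pi / (4 * N)) ^ 2

/-- `cos²(π/(4N))`. -/
noncomputable def c2 (N : ℕ) : ℝ := Real.cos (Real.pi / (4 * N)) ^ 2

/-- The set `G_N` of allowed input pairs: `u ∈ U = {0,2,...,2N-2}`,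
`v ∈ V = {1,3,...,2N-1}`, and either `|u-v| = 1` or `(u,v) = (0,2N-1)`. -/
def Allowed (N u v : ℕ) : Prop :=
  Even u ∧ u < 2 * N ∧ Odd v ∧ v < 2 * N ∧
    (v = u + 1 ∨ u = v + 1 ∨ (u = 0 ∧ v = 2 * N - 1))

/-- The single quantum box `Q(x,y|u,v)`: on the input pair `(0,2N-1)` it equals
`sin²(π/(4N))/2` if `x = y` and `cos²(π/(4N))/2` otherwise; on the input pairs
with `|u-v| = 1` it equals `cos²(π/(4N))/2` if `x = y` and `sin²(π/(4N))/2`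
otherwise. -/
noncomputable def Qbox (N : ℕ) (x y : Bool) (u v : ℕ) : ℝ :=
  if u = 0 ∧ v = 2 * N - 1 then (if x = y then s2 N / 2 else c2 N / 2)
  else (if x = y then c2 N / 2 else s2 N / 2)

/-- The allowed input pairs `(u,v) ∈ G_N` with `|u-v| = 1`, as a finite set. -/
def adjPairs (N : ℕ) : Finset (ℕ × ℕ) :=
  (Finset.range (2 * N) ×ˢ Finset.range (2 * N)).filter
    fun p => Even p.1 ∧ Odd p.2 ∧ (p.2 = p.1 + 1 ∨ p.1 = p.2 + 1)

/-- The chained Bell value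
`I_N(R) = R(0,0|0,2N-1) + R(1,1|0,2N-1) + Σ_{(u,v)∈G_N, |u-v|=1} (R(0,1|u,v) + R(1,0|u,v))`. -/
noncomputable def IBell (N : ℕ) (R : Bool → Bool → ℕ → ℕ → ℝ) : ℝ :=
  R false false 0 (2 * N - 1) + R true true 0 (2 * N - 1) +
    ∑ p ∈ adjPairs N, (R false true p.1 p.2 + R true false p.1 p.2)

/-- The biased boxes: `Qbias N false = Q⁰` is biased towards `x = 0` and
`Qbias N true = Q¹` is biased towards `x = 1`, each by shifting probability
`sin²(π/(4N))/2` within every row. -/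
noncomputable def Qbias (N : ℕ) (σ : Bool) (x y : Bool) (u v : ℕ) : ℝ :=
  if x = σ then Qbox N x y u v + s2 N / 2 else Qbox N x y u v - s2 N / 2


/-- `π⁰(s)` for the prefix `s = x_1…x_k`: the fraction, among strings
`z ∈ {0,1}^n` having `x_1…x_k` as a prefix, of those with `f(z) = 0`. -/
noncomputable def piz {n : ℕ} (f : (Fin n → Bool) → Bool) (k : ℕ)
    (x : Fin n → Bool) : ℝ :=
  ((Finset.univ.filter fun z : Fin n → Bool =>
      (∀ j : Fin n, (j : ℕ) < k → z j = x j) ∧ f z = false).card : ℝ) / 2 ^ (n - k)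

/-- `Δ_i(x_1…x_{i-1}) = |π⁰(x_1…x_{i-1}0) - π⁰(x_1…x_{i-1}1)|` (the index `i`
is 0-based here, so the prefix consists of the coordinates `j < i`). -/
noncomputable def Del {n : ℕ} (f : (Fin n → Bool) → Bool) (i : Fin n)
    (x : Fin n → Bool) : ℝ :=
  |piz f ((i : ℕ) + 1) (Function.update x i false) -
    piz f ((i : ℕ) + 1) (Function.update x i true)|

/-- `f` is almost balanced: `|Pr_x[f(x)=0] - Pr_x[f(x)=1]| ≤ 1/3` over
uniformly random `x ∈ {0,1}^n`. -/
def AlmostBalanced {n : ℕ} (f : (Fin n → Bool) → Bool) : Prop :=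
  |((Finset.univ.filter fun x : Fin n → Bool => f x = false).card : ℝ) / 2 ^ n -
    ((Finset.univ.filter fun x : Fin n → Bool => f x = true).card : ℝ) / 2 ^ n| ≤ 1 / 3

open Classical in
/-- The pivotal index `i(x)`: the least `i` with `Δ_i(x_1…x_{i-1}) ≥ 2/(3n)`
(junk value if none exists). -/
noncomputable def pivot {n : ℕ} (hn : 0 < n) (f : (Fin n → Bool) → Bool)
    (x : Fin n → Bool) : Fin n :=
  if h : ∃ i : Fin n, Del f i x ≥ 2 / (3 * n) then
    Fin.find (fun i : Fin n => Del f i x ≥ 2 / (3 * n)) h else ⟨0, hn⟩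

/-- The bias direction `σ(x)`: `0` if `π⁰(x_1…x_{i(x)-1}0) > π⁰(x_1…x_{i(x)-1}1)`
and `1` otherwise. -/
noncomputable def sig {n : ℕ} (hn : 0 < n) (f : (Fin n → Bool) → Bool)
    (x : Fin n → Bool) : Bool :=
  if piz f ((pivot hn f x : ℕ) + 1) (Function.update x (pivot hn f x) false) >
      piz f ((pivot hn f x : ℕ) + 1) (Function.update x (pivot hn f x) true)
  then false else true


/-- An allowed input string: componentwise allowed input pairs `(u_j, v_j) ∈ G_N`. -/
def AllowedStr (N : ℕ) {n : ℕ} (u v : Fin n → ℕ) : Prop :=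
  ∀ j : Fin n, Allowed N (u j) (v j)

/-- The `n`-fold product quantum system
`P(x,y|u,v) = ∏_j Q(x_j,y_j|u_j,v_j)`. -/
noncomputable def Pprod (N : ℕ) {n : ℕ} (x y : Fin n → Bool) (u v : Fin n → ℕ) : ℝ :=
  ∏ j : Fin n, Qbox N (x j) (y j) (u j) (v j)

/-- The biased `n`-box systems: `Pbias N hn f false = P⁰` biases the pivotal
subsystem of `x` in direction `σ(x)`, and `Pbias N hn f true = P¹` biases it
in direction `1 - σ(x)`; all the non-pivotal subsystems are the unbiased `Q`. -/
noncomputable def Pbias (N : ℕ) {n : ℕ} (hn : 0 < n) (f : (Fin n → Bool) → Bool)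
    (flip : Bool) (x y : Fin n → Bool) (u v : Fin n → ℕ) : ℝ :=
  Qbias N (xor (sig hn f x) flip) (x (pivot hn f x)) (y (pivot hn f x))
      (u (pivot hn f x)) (v (pivot hn f x)) *
    ∏ j ∈ Finset.univ.erase (pivot hn f x), Qbox N (x j) (y j) (u j) (v j)

/-!
Summing `P⁰(x,y|u,v)` over `y` leaves `2^{1-n} (1/2 ± sin²(π/(4N)))`, with sign `+` exactly when
`x_{i(x)} = σ(x)`. Flipping the pivotal bit of `x` changes neither `i(x)` nor `σ(x)`, since both
only look at the prefix of `x` before `i(x)`; so this flip is an involution of `{0,1}^n` exchanging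
the two signs, and the `±` terms cancel.

The flip argument needs the pivot to exist, which is where almost balancedness enters: along
the prefixes of `x`, `π⁰` moves from `π⁰(∅) ∈ [1/3, 2/3]` to `π⁰(x) ∈ {0, 1}`, and `π⁰(s)` is the
average of `π⁰(s0)` and `π⁰(s1)`, so step `i` moves it by `Δ_i / 2`; hence some `Δ_i ≥ 2/(3n)`.
Nonnegativity of `Q^σ` is `sin² ≤ cos²` on `[0, π/4]`.
-/

open Function

lemma s2_add_c2 (N : ℕ) : s2 N + c2 N = 1 := Real.sin_sq_add_cos_sq _

lemma Real.sin_sq_le_cos_sq {θ : ℝ} (h₁ : -(Real.pi / 4) ≤ θ) (h₂ : θ ≤ Real.pi / 4) :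
    Real.sin θ ^ 2 ≤ Real.cos θ ^ 2 := by
  have : 0 ≤ Real.cos (2 * θ) := Real.cos_nonneg_of_neg_pi_div_two_le_of_le (by linarith)
    (by linarith)
  rw [Real.cos_two_mul'] at this
  linarith

lemma s2_le_c2 {N : ℕ} (hN : 1 ≤ N) : s2 N ≤ c2 N := by
  have hpos : 0 < Real.pi / (4 * N) := by positivity
  have hle : Real.pi / (4 * N) ≤ Real.pi / 4 :=
    div_le_div_of_nonneg_left Real.pi_pos.le (by norm_num) (by norm_cast; omega)
  exact Real.sin_sq_le_cos_sq (by linarith) hle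

lemma Qbox_nonneg (N : ℕ) (x y : Bool) (u v : ℕ) : 0 ≤ Qbox N x y u v := by
  unfold Qbox s2 c2
  split_ifs <;> positivity

lemma Qbox_false_add_Qbox_true (N : ℕ) (x : Bool) (u v : ℕ) :
    Qbox N x false u v + Qbox N x true u v = 1 / 2 := by
  have := s2_add_c2 N
  unfold Qbox
  cases x <;> split_ifs <;> simp_all <;> linarith

lemma Qbias_nonneg {N : ℕ} (hN : 1 ≤ N) (σ x y : Bool) (u v : ℕ) :
    0 ≤ Qbias N σ x y u v := by
  have h₁ := s2_le_c2 hN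
  have h₂ : 0 ≤ s2 N := sq_nonneg _
  unfold Qbias Qbox
  split_ifs <;> linarith

lemma Qbias_false_add_Qbias_true (N : ℕ) (σ x : Bool) (u v : ℕ) :
    Qbias N σ x false u v + Qbias N σ x true u v
      = 1 / 2 + (if x = σ then s2 N else -s2 N) := by
  have := Qbox_false_add_Qbox_true N x u v
  unfold Qbias
  split_ifs <;> linarith

section Prefixes

variable {n : ℕ} (f : (Fin n → Bool) → Bool)

lemma piz_congr {k : ℕ} {x x' : Fin n → Bool} (h : ∀ j : Fin n, (j : ℕ) < k → x j = x' j) :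
    piz f k x = piz f k x' := by
  unfold piz
  congr 3
  refine filter_congr fun z _ => and_congr_left' <| forall₂_congr fun j hj => ?_
  rw [h j hj]

lemma piz_eq_average {k : ℕ} (hk : k < n) (x : Fin n → Bool) :
    piz f k x = (piz f (k + 1) (update x ⟨k, hk⟩ false)
      + piz f (k + 1) (update x ⟨k, hk⟩ true)) / 2 := by
  set S := univ.filter fun z : Fin n → Bool =>
    (∀ j : Fin n, (j : ℕ) < k → z j = x j) ∧ f z = false
  have hsplit : ∀ b : Bool, (univ.filter fun z : Fin n → Bool =>
      (∀ j : Fin n, (j : ℕ) < k + 1 → z j = update x ⟨k, hk⟩ b j) ∧ f z = false)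
        = S.filter fun z => z ⟨k, hk⟩ = b := by
    intro b
    ext z
    simp only [S, mem_filter, mem_univ, true_and, Nat.lt_succ_iff_lt_or_eq, or_imp, forall_and]
    constructor
    · rintro ⟨⟨hlt, heq⟩, hfz⟩
      refine ⟨⟨fun j hj => ?_, hfz⟩, by simpa using heq ⟨k, hk⟩ rfl⟩
      rw [hlt j hj, update_of_ne (Fin.ne_of_val_ne hj.ne)]
    · rintro ⟨⟨hlt, hfz⟩, hzk⟩
      refine ⟨⟨fun j hj => ?_, fun j hj => ?_⟩, hfz⟩
      · rw [hlt j hj, update_of_ne (Fin.ne_of_val_ne hj.ne)]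
      · obtain rfl : j = ⟨k, hk⟩ := Fin.ext hj
        simpa using hzk
  have hcard : (S.card : ℝ) = (S.filter fun z => z ⟨k, hk⟩ = false).card
      + (S.filter fun z => z ⟨k, hk⟩ = true).card := by
    rw [← card_filter_add_card_filter_not (fun z => z ⟨k, hk⟩ = false)]
    simp
  unfold piz
  rw [hsplit, hsplit, ← show piz f k x = S.card / 2 ^ (n - k) from rfl, piz,
    show n - k = n - (k + 1) + 1 by omega, pow_succ, hcard]
  field_simp

lemma abs_piz_succ_sub_piz {k : ℕ} (hk : k < n) (x : Fin n → Bool) :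
    |piz f (k + 1) x - piz f k x| = Del f ⟨k, hk⟩ x / 2 := by
  have hx : piz f (k + 1) x = piz f (k + 1) (update x ⟨k, hk⟩ (x ⟨k, hk⟩)) := by
    rw [update_eq_self]
  rw [hx, piz_eq_average f hk, Del]
  cases x ⟨k, hk⟩
  · rw [show ∀ a b : ℝ, a - (a + b) / 2 = (a - b) / 2 by intros; ring, abs_div, abs_two]
  · rw [show ∀ a b : ℝ, b - (a + b) / 2 = -((a - b) / 2) by intros; ring, abs_neg, abs_div,
      abs_two]

lemma piz_full_length (x : Fin n → Bool) : piz f n x = if f x = false then 1 else 0 := by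
  have hfilter : (univ.filter fun z : Fin n → Bool =>
      (∀ j : Fin n, (j : ℕ) < n → z j = x j) ∧ f z = false)
        = univ.filter fun z => z = x ∧ f x = false := by
    refine filter_congr fun z _ => ?_
    simp only [Fin.is_lt, forall_const, ← funext_iff]
    constructor <;> rintro ⟨rfl, h⟩ <;> exact ⟨rfl, h⟩
  unfold piz
  rw [hfilter]
  split_ifs with h <;> simp [h, filter_eq']

variable {f}

lemma AlmostBalanced.abs_piz_zero_sub_half_le (hf : AlmostBalanced f) (x : Fin n → Bool) :
    |piz f 0 x - 1 / 2| ≤ 1 / 6 := by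
  set a : ℝ := ((univ.filter fun z : Fin n → Bool => f z = false).card : ℝ)
  set b : ℝ := ((univ.filter fun z : Fin n → Bool => f z = true).card : ℝ)
  have hpiz : piz f 0 x = a / 2 ^ n := by simp [piz, a]
  have hab : a + b = 2 ^ n := by
    have := card_filter_add_card_filter_not (s := univ) (fun z : Fin n → Bool => f z = false)
    simp only [Bool.not_eq_false, card_univ, Fintype.card_pi, Fintype.card_bool, prod_const,
      Fintype.card_fin] at this
    simp only [a, b]
    exact_mod_cast this
  have h2n : (0 : ℝ) < 2 ^ n := by positivity
  rw [AlmostBalanced, ← sub_div, abs_div, abs_of_pos h2n, div_le_iff₀ h2n] at hf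
  rw [hpiz, show a / 2 ^ n - 1 / 2 = (a - b) / 2 ^ n / 2 by field_simp; linarith, abs_div,
    abs_div, abs_of_pos h2n, abs_two, div_div, div_le_iff₀ (by positivity)]
  linarith

lemma exists_Del_ge (hn : 0 < n) (hf : AlmostBalanced f) (x : Fin n → Bool) :
    ∃ i : Fin n, Del f i x ≥ 2 / (3 * n) := by
  by_contra! hsmall
  have hstep : ∀ k ∈ range n, |piz f (k + 1) x - piz f k x| < 1 / (3 * n) := fun k hk => by
    rw [abs_piz_succ_sub_piz f (mem_range.1 hk)]
    linarith [hsmall ⟨k, mem_range.1 hk⟩, show 2 / (3 * (n : ℝ)) = 2 * (1 / (3 * n)) by ring]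
  have htotal : |piz f n x - piz f 0 x| < 1 / 3 :=
    calc |piz f n x - piz f 0 x|
        = |∑ k ∈ range n, (piz f (k + 1) x - piz f k x)| := by
          rw [sum_range_sub (fun k => piz f k x)]
      _ ≤ ∑ k ∈ range n, |piz f (k + 1) x - piz f k x| := abs_sum_le_sum_abs _ _
      _ < ∑ _k ∈ range n, 1 / (3 * (n : ℝ)) :=
          sum_lt_sum_of_nonempty (nonempty_range_iff.2 hn.ne') hstep
      _ = 1 / 3 := by simp only [sum_const, card_range, nsmul_eq_mul]; field_simp
  have hstart := hf.abs_piz_zero_sub_half_le x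
  rw [piz_full_length] at htotal
  rw [abs_le] at hstart
  rw [abs_lt] at htotal
  split_ifs at htotal <;> linarith

end Prefixes

section Pivot

variable {n : ℕ} {f : (Fin n → Bool) → Bool}

lemma Del_congr (i : Fin n) {x x' : Fin n → Bool}
    (h : ∀ j : Fin n, j < i → x j = x' j) : Del f i x = Del f i x' := by
  have hb : ∀ b : Bool, piz f (i + 1) (update x i b) = piz f (i + 1) (update x' i b) :=
    fun b => piz_congr f fun j hj => by
      rcases eq_or_ne j i with rfl | hne
      · simp
      · rw [update_of_ne hne, update_of_ne hne]
        exact h j (lt_of_le_of_ne (Fin.le_iff_val_le_val.2 (Nat.lt_succ_iff.1 hj)) hne)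
  rw [Del, Del, hb, hb]

open Classical in
lemma pivot_eq_find (hn : 0 < n) (hf : AlmostBalanced f) (x : Fin n → Bool) :
    pivot hn f x = Fin.find (fun i => Del f i x ≥ 2 / (3 * n)) (exists_Del_ge hn hf x) :=
  dif_pos _

lemma pivot_update (hn : 0 < n) (hf : AlmostBalanced f) (x : Fin n → Bool) (b : Bool) :
    pivot hn f (update x (pivot hn f x) b) = pivot hn f x := by
  classical
  -- `Δ_j` for `j ≤ i(x)` only reads the bits of `x` before `j`.
  have hagree : ∀ j ≤ pivot hn f x,
      Del f j x ≥ 2 / (3 * n) ↔ Del f j (update x (pivot hn f x) b) ≥ 2 / (3 * n) :=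
    fun j hj => by
      rw [Del_congr j fun l hl => (update_of_ne (hl.trans_le hj).ne _ _).symm]
  have hspec : Del f (pivot hn f x) x ≥ 2 / (3 * n) := by
    rw [pivot_eq_find hn hf]
    exact Fin.find_spec (exists_Del_ge hn hf x)
  rw [pivot_eq_find hn hf (update _ _ _)]
  exact (Fin.find_congr hspec hagree).symm.trans (pivot_eq_find hn hf x).symm

lemma sig_update (hn : 0 < n) (hf : AlmostBalanced f) (x : Fin n → Bool) (b : Bool) :
    sig hn f (update x (pivot hn f x) b) = sig hn f x := by
  rw [sig, sig, pivot_update hn hf, update_idem, update_idem]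

end Pivot

lemma sum_ite_apply_eq_eq_zero {ι M : Type*} [Fintype ι] [DecidableEq ι] [AddCommGroup M]
    (i : (ι → Bool) → ι) (σ : (ι → Bool) → Bool) (hi : ∀ x b, i (update x (i x) b) = i x)
    (hσ : ∀ x b, σ (update x (i x) b) = σ x) (c : M) :
    ∑ x, (if x (i x) = σ x then c else -c) = 0 := by
  refine sum_ninvolution (fun x => update x (i x) (!x (i x))) (fun x => ?_) (fun x _ h => ?_)
    (fun _ => mem_univ _) (fun x => ?_)
  · rw [hi, hσ, update_self]
    cases x (i x) <;> cases σ x <;> simp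
  · simpa using congrFun h (i x)
  · rw [hi, update_self, Bool.not_not, update_idem, update_eq_self]

section Systems

variable (N : ℕ) {n : ℕ} (hn : 0 < n) (f : (Fin n → Bool) → Bool) (flip : Bool)

lemma Pbias_nonneg (hN : 1 ≤ N) (x y : Fin n → Bool) (u v : Fin n → ℕ) :
    0 ≤ Pbias N hn f flip x y u v :=
  mul_nonneg (Qbias_nonneg hN ..) (prod_nonneg fun _ _ => Qbox_nonneg ..)

lemma sum_Pbias_right (x : Fin n → Bool) (u v : Fin n → ℕ) :
    ∑ y, Pbias N hn f flip x y u v = (1 / 2) ^ (n - 1) *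
      (1 / 2 + if x (pivot hn f x) = xor (sig hn f x) flip then s2 N else -s2 N) := by
  set i := pivot hn f x
  set g : Fin n → Bool → ℝ := fun j b =>
    if j = i then Qbias N (xor (sig hn f x) flip) (x j) b (u j) (v j)
    else Qbox N (x j) b (u j) (v j)
  have hP : ∀ y, Pbias N hn f flip x y u v = ∏ j, g j (y j) := fun y => by
    rw [← mul_prod_erase univ _ (mem_univ i), Pbias]
    congr 1
    · exact (if_pos rfl).symm
    · exact prod_congr rfl fun j hj => (if_neg (ne_of_mem_erase hj)).symm
  have hrow : ∀ j ∈ univ.erase i, ∑ b, g j b = 1 / 2 := fun j hj => by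
    rw [Fintype.sum_bool, add_comm]
    simpa [g, ne_of_mem_erase hj] using Qbox_false_add_Qbox_true N (x j) (u j) (v j)
  simp_rw [hP]
  rw [← Fintype.prod_sum, ← mul_prod_erase univ _ (mem_univ i), prod_congr rfl hrow, prod_const,
    card_erase_of_mem (mem_univ i), card_univ, Fintype.card_fin, Fintype.sum_bool, add_comm,
    mul_comm]
  simpa [g] using Qbias_false_add_Qbias_true N _ (x i) (u i) (v i)

lemma sum_sum_Pbias_eq_one (hf : AlmostBalanced f) (u v : Fin n → ℕ) :
    ∑ x, ∑ y, Pbias N hn f flip x y u v = 1 := by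
  have hcancel := sum_ite_apply_eq_eq_zero (pivot hn f) (fun x => xor (sig hn f x) flip)
    (pivot_update hn hf) (fun x b => by simp only [sig_update hn hf]) (s2 N)
  simp_rw [sum_Pbias_right, ← mul_sum, sum_add_distrib, hcancel]
  simp only [sum_const, card_univ, Fintype.card_pi, Fintype.card_bool, prod_const,
    Fintype.card_fin, nsmul_eq_mul, add_zero]
  obtain ⟨m, rfl⟩ : ∃ m, n = m + 1 := ⟨n - 1, by omega⟩
  rw [Nat.add_sub_cancel, pow_succ]
  push_cast
  field_simp
  rw [← mul_pow]
  norm_num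

end Systems

theorem biased_system_is_distribution_general (N n : ℕ) (hN : 1 ≤ N) (hn : 0 < n)
    (f : (Fin n → Bool) → Bool) (hf : AlmostBalanced f) (u v : Fin n → ℕ) :
    (∀ x y : Fin n → Bool, 0 ≤ Pbias N hn f false x y u v) ∧
    (∑ x : Fin n → Bool, ∑ y : Fin n → Bool, Pbias N hn f false x y u v = 1) :=
  ⟨fun x y => Pbias_nonneg N hn f false hN x y u v, sum_sum_Pbias_eq_one N hn f false hf u v⟩

/-- For `N ≥ 1`, `n ≥ 1` and an almost balanced `f`, the biased system `P⁰`
is a conditional probability distribution: it is nonnegative and sums to `1`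
over all outputs, for every allowed input string. -/
theorem biased_system_is_distribution (N n : ℕ) (hN : 1 ≤ N) (hn : 0 < n)
    (f : (Fin n → Bool) → Bool) (hf : AlmostBalanced f) (u v : Fin n → ℕ)
    (huv : AllowedStr N u v) :
    (∀ x y : Fin n → Bool, 0 ≤ Pbias N hn f false x y u v) ∧
    (∑ x : Fin n → Bool, ∑ y : Fin n → Bool, Pbias N hn f false x y u v = 1) :=
  biased_system_is_distribution_general N n hN hn f hf u v
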